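/- Under the hypotheses of Theorem 1, combining upper and lower bounds: ‖Y (I − H† H)‖_F² ≤ ‖Y − K* H‖_F² ≤ ‖Y (I − H† H)‖_F² + Σ_{i≠j} c_{ij} (1 − δ*_{ij}). -/
import Mathlib


open Matrix BigOperators

/-- Squared Frobenius norm of a real matrix. -/
noncomputable def frobSq {m n : ℕ} (A : Matrix (Fin m) (Fin n) ℝ) : ℝ :=
  ∑ i, ∑ j, (A i j) ^ 2

lemma frobSq_nonneg {m n : ℕ} (A : Matrix (Fin m) (Fin n) ℝ) : 0 ≤ frobSq A :=
  Finset.sum_nonneg fun _ _ => Finset.sum_nonneg fun _ _ => sq_nonneg _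

lemma frobSq_add_orth {m n : ℕ} (A B : Matrix (Fin m) (Fin n) ℝ)
    (h : A * Bᵀ = 0) : frobSq (A + B) = frobSq A + frobSq B := by
  have cross : ∑ i, ∑ j, A i j * B i j = 0 := by
    have : ∑ i, (A * Bᵀ) i i = 0 := by rw [h]; simp
    simpa [Matrix.mul_apply, Matrix.transpose_apply] using this
  have : frobSq (A + B) = frobSq A + frobSq B + 2 * ∑ i, ∑ j, A i j * B i j := by
    simp only [frobSq, Matrix.add_apply, Finset.mul_sum, ← Finset.sum_add_distrib]
    congr 1; ext i; congr 1; ext j; ring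
  rw [this, cross]; ring

/-- Theorem 1: two-sided bound
`‖Y (I − H† H)‖_F² ≤ ‖Y − K* H‖_F² ≤ ‖Y (I − H† H)‖_F² + Σ_{i≠j} c_ij (1 − δ*_ij)`. -/
theorem optimized_topology_prediction_error_bounds
    (M p q s : ℕ)
    (H : Matrix (Fin q) (Fin s) ℝ) (Y : Matrix (Fin p) (Fin s) ℝ)
    (Hd : Matrix (Fin s) (Fin q) ℝ)
    (h1 : H * Hd * H = H) (h2 : Hd * H * Hd = Hd)
    (h3 : (H * Hd)ᵀ = H * Hd) (h4 : (Hd * H)ᵀ = Hd * H)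
    (c : Fin M → Fin M → ℝ) (hc : ∀ i j, 0 ≤ c i j)
    (S : Set ((Fin M → Fin M → ℝ) × Matrix (Fin p) (Fin q) ℝ))
    (Δstar : Fin M → Fin M → ℝ) (Kstar : Matrix (Fin p) (Fin q) ℝ)
    (hδbin : ∀ i j, Δstar i j = 0 ∨ Δstar i j = 1)
    (hfeas : (Δstar, Kstar) ∈ S)
    (hmin : ∀ ΔK ∈ S,
      (∑ i, ∑ j, c i j * Δstar i j) + frobSq (Y - Kstar * H) ≤
      (∑ i, ∑ j, c i j * ΔK.1 i j) + frobSq (Y - ΔK.2 * H))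
    (Δone : Fin M → Fin M → ℝ)
    (hΔone : ∀ i j, Δone i j = if i = j then 0 else 1)
    (hfeas1 : (Δone, Y * Hd) ∈ S) :
    frobSq (Y * (1 - Hd * H)) ≤ frobSq (Y - Kstar * H) ∧
    frobSq (Y - Kstar * H) ≤
      frobSq (Y * (1 - Hd * H)) +
        ∑ i, ∑ j, (if i = j then 0 else c i j * (1 - Δstar i j)) := by
  -- key algebraic fact: (1 - Hd*H) * Hᵀ = 0
  have hHzero : ((1 : Matrix (Fin s) (Fin s) ℝ) - Hd * H) * Hᵀ = 0 := by
    have : (Hd * H) * Hᵀ = Hᵀ := by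
      calc (Hd * H) * Hᵀ = (Hd * H)ᵀ * Hᵀ := by rw [h4]
        _ = (H * (Hd * H))ᵀ := by simp [Matrix.transpose_mul, Matrix.mul_assoc]
        _ = Hᵀ := by rw [← Matrix.mul_assoc, h1]
    rw [Matrix.sub_mul, Matrix.one_mul, this, sub_self]
  -- orthogonal decomposition for any K
  have hdec : ∀ K : Matrix (Fin p) (Fin q) ℝ,
      frobSq (Y - K * H) = frobSq (Y * (1 - Hd * H)) + frobSq ((Y * Hd - K) * H) := by
    intro K
    have heq : Y - K * H = Y * (1 - Hd * H) + (Y * Hd - K) * H := by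
      rw [Matrix.mul_sub, Matrix.mul_one, Matrix.sub_mul, Matrix.mul_assoc]
      abel
    have horth : (Y * (1 - Hd * H)) * ((Y * Hd - K) * H)ᵀ = 0 := by
      rw [Matrix.transpose_mul, Matrix.mul_assoc, ← Matrix.mul_assoc (1 - Hd * H),
        hHzero, Matrix.zero_mul, Matrix.mul_zero]
    rw [heq, frobSq_add_orth _ _ horth]
  constructor
  · rw [hdec Kstar]
    linarith [frobSq_nonneg ((Y * Hd - Kstar) * H)]
  · have hm := hmin (Δone, Y * Hd) hfeas1
    simp only at hm
    have hY : Y - Y * Hd * H = Y * (1 - Hd * H) := by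
      rw [Matrix.mul_sub, Matrix.mul_one, Matrix.mul_assoc]
    rw [hY] at hm
    -- it remains to compare the sums
    have hsum : (∑ i, ∑ j, c i j * Δone i j) - (∑ i, ∑ j, c i j * Δstar i j) ≤
        ∑ i, ∑ j, (if i = j then 0 else c i j * (1 - Δstar i j)) := by
      rw [← Finset.sum_sub_distrib]
      apply Finset.sum_le_sum
      intro i _
      rw [← Finset.sum_sub_distrib]
      apply Finset.sum_le_sum
      intro j _
      have hd : ∀ a b, 0 ≤ Δstar a b := fun a b => by
        rcases hδbin a b with h' | h' <;> simp [h']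
      rcases eq_or_ne i j with h | h
      · simp [hΔone, h]
        exact mul_nonneg (hc _ _) (hd _ _)
      · simp [hΔone, h]
        ring_nf
        nlinarith [hc i j]
    linarith
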